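/- Let f, Φ : ℝ³ → ℝ be C² with ∇f(x) ≠ 0 for every x, let G : ℝ² → ℝ be C², and define g = ‖∇f‖², γ = ⟨∇f, ∇Φ⟩ / g, α(x) = (∂₁G)(f(x), Φ(x)), and v = α (∇Φ − γ ∇f). Then every solution x : I → ℝ³ of ẋ = v(x) satisfies: (i) f(x(t)) is constant on I (the particle stays on the surface f = c); and (ii) for every t ∈ I, the vector ẍ(t) − ∇(½‖v‖²)(x(t)) is a scalar multiple of ∇f(x(t)) (the reaction force is normal to the surface). -/

import Mathlib

/-!
Write `w = ∇Φ − γ∇f`, the projection of `∇Φ` onto the tangent planes of the level sets of `f`.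
Then `v = α w ⊥ ∇f`, so `f` is constant along trajectories. Along a trajectory
`ẍ = (v·∇)v = ∇(½‖v‖²) + (rot v) × v`. Since `rot ∇Φ = 0` and `∇α = ∂₁∂₁G ∇f + ∂₂∂₁G ∇Φ` lies in
the span of `∇f` and `w`, one gets `rot v = ∇f × p` for an explicit `p`, and then
`(∇f × p) × v = −⟨p, v⟩ ∇f` because `v ⊥ ∇f`.
-/

open Real Set

noncomputable section

/-- Partial derivative in the `k`-th coordinate direction. -/
def pd (k : Fin 3) (f : (Fin 3 → ℝ) → ℝ) (x : Fin 3 → ℝ) : ℝ :=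
  fderiv ℝ f x (Pi.single k 1)

/-- Gradient. -/
def grad (f : (Fin 3 → ℝ) → ℝ) (x : Fin 3 → ℝ) : Fin 3 → ℝ := fun k => pd k f x

/-- Euclidean inner product on ℝ³. -/
def dot (a b : Fin 3 → ℝ) : ℝ := ∑ i, a i * b i

/-- Squared Euclidean norm on ℝ³. -/
def nsq (a : Fin 3 → ℝ) : ℝ := ∑ i, a i ^ 2

/-- Cross product on ℝ³. -/
def cross (a b : Fin 3 → ℝ) : Fin 3 → ℝ :=
  ![a 1 * b 2 - a 2 * b 1, a 2 * b 0 - a 0 * b 2, a 0 * b 1 - a 1 * b 0]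

/-- Curl of a vector field on ℝ³. -/
def rot (u : (Fin 3 → ℝ) → (Fin 3 → ℝ)) (x : Fin 3 → ℝ) : Fin 3 → ℝ :=
  ![pd 1 (fun y => u y 2) x - pd 2 (fun y => u y 1) x,
    pd 2 (fun y => u y 0) x - pd 0 (fun y => u y 2) x,
    pd 0 (fun y => u y 1) x - pd 1 (fun y => u y 0) x]

open scoped Matrix

lemma cross_eq_crossProduct (a b : Fin 3 → ℝ) : cross a b = a ⨯₃ b := (cross_apply a b).symm

lemma dot_eq_dotProduct (a b : Fin 3 → ℝ) : dot a b = a ⬝ᵥ b := rfl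

lemma nsq_eq_dotProduct_self (a : Fin 3 → ℝ) : nsq a = a ⬝ᵥ a := by
  simp [nsq, dotProduct, sq]

lemma nsq_ne_zero {a : Fin 3 → ℝ} (ha : a ≠ 0) : nsq a ≠ 0 := by
  rwa [nsq_eq_dotProduct_self, Ne, dotProduct_self_eq_zero]

lemma dot_smul_sub_proj_eq_zero {n : Fin 3 → ℝ} (hn : n ≠ 0) (c : ℝ) (m : Fin 3 → ℝ) :
    dot (c • (m - (dot n m / nsq n) • n)) n = 0 := by
  simp only [dot_eq_dotProduct, nsq_eq_dotProduct_self, smul_dotProduct, sub_dotProduct,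
    dotProduct_comm m n, smul_eq_mul, div_mul_cancel₀ _ (dotProduct_self_eq_zero.not.mpr hn),
    sub_self, mul_zero]

lemma cross_cross_eq_neg_smul_of_dot_eq_zero {n p v : Fin 3 → ℝ} (hnv : dot v n = 0) :
    cross (cross n p) v = -dot p v • n := by
  rw [cross_eq_crossProduct, cross_eq_crossProduct, cross_cross_eq_smul_sub_smul, dotProduct_comm,
    ← dot_eq_dotProduct, hnv, zero_smul, zero_sub, dot_eq_dotProduct, neg_smul]

section Smoothness

variable {E : Type*} [NormedAddCommGroup E] [NormedSpace ℝ E] {n : WithTop ℕ∞}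
  {u w : E → Fin 3 → ℝ}

lemma ContDiff.dot (hu : ContDiff ℝ n u) (hw : ContDiff ℝ n w) :
    ContDiff ℝ n (fun y => dot (u y) (w y)) :=
  ContDiff.sum fun i _ => (contDiff_pi.mp hu i).mul (contDiff_pi.mp hw i)

lemma ContDiff.nsq (hu : ContDiff ℝ n u) : ContDiff ℝ n (fun y => nsq (u y)) :=
  ContDiff.sum fun i _ => (contDiff_pi.mp hu i).pow 2

end Smoothness

section PartialDerivatives

variable {u w : (Fin 3 → ℝ) → ℝ} {x : Fin 3 → ℝ}

lemma HasFDerivAt.pd_eq {L : (Fin 3 → ℝ) →L[ℝ] ℝ} (h : HasFDerivAt u L x) (k : Fin 3) :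
    pd k u x = L (Pi.single k 1) := by
  rw [pd, h.fderiv]

lemma fderiv_apply_eq_dot_grad (u : (Fin 3 → ℝ) → ℝ) (x V : Fin 3 → ℝ) :
    fderiv ℝ u x V = dot V (grad u x) := by
  conv_lhs => rw [pi_eq_sum_univ' V]
  simp [dot, grad, pd]

lemma pd_mul (hu : DifferentiableAt ℝ u x) (hw : DifferentiableAt ℝ w x) (k : Fin 3) :
    pd k (fun y => u y * w y) x = pd k u x * w x + u x * pd k w x := by
  rw [(hu.hasFDerivAt.fun_mul hw.hasFDerivAt).pd_eq, pd, pd]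
  simp only [add_apply, smul_apply, smul_eq_mul]
  ring

lemma pd_sub (hu : DifferentiableAt ℝ u x) (hw : DifferentiableAt ℝ w x) (k : Fin 3) :
    pd k (fun y => u y - w y) x = pd k u x - pd k w x :=
  (hu.hasFDerivAt.fun_sub hw.hasFDerivAt).pd_eq k

lemma hasDerivAt_comp_curve {c : ℝ → Fin 3 → ℝ} {t : ℝ} {V : Fin 3 → ℝ}
    (hu : DifferentiableAt ℝ u (c t)) (hc : HasDerivAt c V t) :
    HasDerivAt (fun s => u (c s)) (dot V (grad u (c t))) t := by
  rw [← fderiv_apply_eq_dot_grad]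
  exact hu.hasFDerivAt.comp_hasDerivAt t hc

lemma apply_eq_of_dot_grad_eq_zero {v : (Fin 3 → ℝ) → Fin 3 → ℝ} {c : ℝ → Fin 3 → ℝ} {a b : ℝ}
    (hu : Differentiable ℝ u) (horth : ∀ y, dot (v y) (grad u y) = 0)
    (hc : ∀ t ∈ Ioo a b, HasDerivAt c (v (c t)) t) {t s : ℝ} (ht : t ∈ Ioo a b)
    (hs : s ∈ Ioo a b) : u (c t) = u (c s) := by
  have hD : ∀ τ ∈ Ioo a b, HasDerivAt (fun s => u (c s)) 0 τ := fun τ hτ =>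
    horth (c τ) ▸ hasDerivAt_comp_curve (hu _) (hc τ hτ)
  exact isOpen_Ioo.is_const_of_deriv_eq_zero isPreconnected_Ioo
    (fun τ hτ => (hD τ hτ).differentiableAt.differentiableWithinAt)
    (fun τ hτ => (hD τ hτ).deriv) ht hs

end PartialDerivatives

section Gradient

variable {f : (Fin 3 → ℝ) → ℝ}

lemma contDiff_grad {n : WithTop ℕ∞} (hf : ContDiff ℝ (n + 1) f) : ContDiff ℝ n (grad f) :=
  contDiff_pi.mpr fun _ => (hf.fderiv_right le_rfl).clm_apply contDiff_const

lemma differentiable_grad_apply (hf : ContDiff ℝ 2 f) (k : Fin 3) :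
    Differentiable ℝ (fun y => grad f y k) :=
  (contDiff_pi.mp (contDiff_grad (n := 1) hf) k).differentiable one_ne_zero

lemma pd_grad_comm (hf : ContDiff ℝ 2 f) (x : Fin 3 → ℝ) (i k : Fin 3) :
    pd i (fun y => grad f y k) x = pd k (fun y => grad f y i) x := by
  have hfd : DifferentiableAt ℝ (fderiv ℝ f) x :=
    (hf.fderiv_right (m := 1) le_rfl).differentiable one_ne_zero x
  have hpd : ∀ i k, pd i (fun y => grad f y k) x =
      fderiv ℝ (fderiv ℝ f) x (Pi.single i 1) (Pi.single k 1) := fun i k =>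
    (hfd.hasFDerivAt.clm_apply (hasFDerivAt_const (Pi.single k 1) x)).pd_eq i |>.trans (by simp)
  rw [hpd, hpd]
  exact hf.contDiffAt.isSymmSndFDerivAt (by simp [minSmoothness_of_isRCLikeNormedField]) _ _

lemma rot_grad (hf : ContDiff ℝ 2 f) (x : Fin 3 → ℝ) : rot (grad f) x = 0 := by
  ext i
  fin_cases i <;> simp [rot, pd_grad_comm hf x 1 2, pd_grad_comm hf x 2 0, pd_grad_comm hf x 0 1]

lemma grad_comp_prodMk {Φ : (Fin 3 → ℝ) → ℝ} {h : ℝ × ℝ → ℝ} {x : Fin 3 → ℝ}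
    (hh : DifferentiableAt ℝ h (f x, Φ x)) (hf : DifferentiableAt ℝ f x)
    (hΦ : DifferentiableAt ℝ Φ x) :
    grad (fun y => h (f y, Φ y)) x =
      fderiv ℝ h (f x, Φ x) (1, 0) • grad f x + fderiv ℝ h (f x, Φ x) (0, 1) • grad Φ x := by
  ext k
  have hd : HasFDerivAt (fun y => h (f y, Φ y)) _ x :=
    hh.hasFDerivAt.comp x (hf.hasFDerivAt.prodMk hΦ.hasFDerivAt)
  have hsplit : ∀ a b : ℝ, ((a, b) : ℝ × ℝ) = a • (1, 0) + b • (0, 1) := by simp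
  rw [grad, hd.pd_eq, ContinuousLinearMap.comp_apply, ContinuousLinearMap.prod_apply,
    hsplit (fderiv ℝ f x _), map_add, map_smul, map_smul]
  simp [grad, pd, mul_comm]

end Gradient

section VectorField

variable {u w : (Fin 3 → ℝ) → Fin 3 → ℝ} {x : Fin 3 → ℝ}

/-- The convective derivative `(u · ∇) u`. -/
def convective (u : (Fin 3 → ℝ) → Fin 3 → ℝ) (x : Fin 3 → ℝ) : Fin 3 → ℝ :=
  fun k => dot (u x) (grad (fun y => u y k) x)

lemma hasDerivAt_comp_integralCurve {c : ℝ → Fin 3 → ℝ} {t : ℝ}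
    (hu : ∀ k, DifferentiableAt ℝ (fun y => u y k) (c t)) (hc : HasDerivAt c (u (c t)) t) :
    HasDerivAt (fun s => u (c s)) (convective u (c t)) t :=
  hasDerivAt_pi.mpr fun k => hasDerivAt_comp_curve (hu k) hc

lemma grad_half_nsq (hu : ∀ k, DifferentiableAt ℝ (fun y => u y k) x) :
    grad (fun y => 1 / 2 * nsq (u y)) x = fun k => ∑ i, u x i * pd k (fun y => u y i) x := by
  have hd : HasFDerivAt (fun y => 1 / 2 * nsq (u y))
      ((1 / 2 : ℝ) • ∑ i, (2 * u x i) • fderiv ℝ (fun y => u y i) x) x := by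
    refine (HasFDerivAt.fun_sum fun i _ => ?_).const_mul (1 / 2)
    simpa using (hu i).hasFDerivAt.pow 2
  ext k
  rw [grad, hd.pd_eq]
  simp only [one_div, smul_apply, sum_apply, smul_eq_mul, Finset.mul_sum, pd]
  exact Finset.sum_congr rfl fun i _ => by ring

lemma convective_eq_grad_half_nsq_add_cross_rot
    (hu : ∀ k, DifferentiableAt ℝ (fun y => u y k) x) :
    convective u x = grad (fun y => 1 / 2 * nsq (u y)) x + cross (rot u x) (u x) := by
  rw [grad_half_nsq hu]
  ext k
  fin_cases k <;>
  · simp only [convective, dot, grad, rot, cross, Fin.sum_univ_three, Pi.add_apply, Fin.isValue,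
      Fin.zero_eta, Fin.mk_one, Fin.reduceFinMk, Matrix.cons_val_zero, Matrix.cons_val_one,
      Matrix.cons_val]
    ring

lemma rot_smul {a : (Fin 3 → ℝ) → ℝ} (ha : DifferentiableAt ℝ a x)
    (hu : ∀ k, DifferentiableAt ℝ (fun y => u y k) x) :
    rot (fun y => a y • u y) x = cross (grad a x) (u x) + a x • rot u x := by
  ext i
  fin_cases i <;>
  · simp only [rot, cross, grad, pd_mul ha (hu _), Pi.add_apply, Pi.smul_apply, smul_eq_mul,
      Matrix.smul_cons, Matrix.smul_empty, Fin.isValue, Fin.zero_eta, Fin.mk_one, Fin.reduceFinMk,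
      Matrix.cons_val_zero, Matrix.cons_val_one, Matrix.cons_val]
    ring

lemma rot_sub (hu : ∀ k, DifferentiableAt ℝ (fun y => u y k) x)
    (hw : ∀ k, DifferentiableAt ℝ (fun y => w y k) x) :
    rot (fun y => u y - w y) x = rot u x - rot w x := by
  ext i
  fin_cases i <;>
  · simp only [rot, pd_sub (hu _) (hw _), Pi.sub_apply, Fin.isValue, Fin.zero_eta, Fin.mk_one,
      Fin.reduceFinMk, Matrix.cons_val_zero, Matrix.cons_val_one, Matrix.cons_val]
    ring

end VectorField

section TangentialField

variable {f Φ γ α : (Fin 3 → ℝ) → ℝ} {x : Fin 3 → ℝ}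

lemma differentiableAt_grad_sub_smul_grad_apply (hf : ContDiff ℝ 2 f) (hΦ : ContDiff ℝ 2 Φ)
    (hγ : DifferentiableAt ℝ γ x) (k : Fin 3) :
    DifferentiableAt ℝ (fun y => (grad Φ y - γ y • grad f y) k) x :=
  (differentiable_grad_apply hΦ k x).sub (hγ.mul (differentiable_grad_apply hf k x))

lemma differentiable_dot_grad_div_nsq_grad (hf : ContDiff ℝ 2 f) (hΦ : ContDiff ℝ 2 Φ)
    (hf0 : ∀ x, grad f x ≠ 0) :
    Differentiable ℝ (fun y => dot (grad f y) (grad Φ y) / nsq (grad f y)) :=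
  (((contDiff_grad hf).dot (contDiff_grad hΦ)).div (contDiff_grad hf).nsq
    fun y => nsq_ne_zero (hf0 y)).differentiable one_ne_zero

lemma rot_smul_grad_sub_smul_grad (hf : ContDiff ℝ 2 f) (hΦ : ContDiff ℝ 2 Φ)
    (hγ : DifferentiableAt ℝ γ x) (hα : DifferentiableAt ℝ α x) {a b : ℝ}
    (hgrad : grad α x = a • grad f x + b • grad Φ x) :
    rot (fun y => α y • (grad Φ y - γ y • grad f y)) x =
      cross (grad f x) ((a + b * γ x) • (grad Φ x - γ x • grad f x) + α x • grad γ x) := by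
  have hgf := fun k => differentiable_grad_apply hf k x
  rw [rot_smul hα (differentiableAt_grad_sub_smul_grad_apply hf hΦ hγ),
    rot_sub (u := grad Φ) (w := fun y => γ y • grad f y)
      (fun k => differentiable_grad_apply hΦ k x) (fun k => hγ.mul (hgf k)),
    rot_smul hγ hgf, rot_grad hΦ, rot_grad hf, hgrad]
  ext i
  fin_cases i <;>
  · simp only [cross, Pi.add_apply, Pi.sub_apply, Pi.smul_apply, smul_eq_mul, Matrix.smul_cons,
      Matrix.smul_empty, Matrix.neg_cons, Matrix.neg_empty, smul_zero, add_zero, zero_sub, neg_sub,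
      Fin.isValue, Fin.zero_eta, Fin.mk_one, Fin.reduceFinMk, Matrix.cons_val_zero,
      Matrix.cons_val_one, Matrix.cons_val]
    ring

end TangentialField

/-- A particle constrained to the surface `f = c` (equations (12)/(K444)): along
solutions of `ẋ = v(x)` with `v = ∂₁G(f,Φ)(∇Φ − γ∇f)`, `f` is constant and the
acceleration differs from `∇(½‖v‖²)` by a vector normal to the surface. -/
theorem constrained_surface_motion
    (f Φ : (Fin 3 → ℝ) → ℝ) (hf : ContDiff ℝ 2 f) (hΦ : ContDiff ℝ 2 Φ)
    (hf0 : ∀ x, grad f x ≠ 0)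
    (G : ℝ × ℝ → ℝ) (hG : ContDiff ℝ 2 G)
    (g γ α : (Fin 3 → ℝ) → ℝ)
    (hg : ∀ x, g x = nsq (grad f x))
    (hγ : ∀ x, γ x = dot (grad f x) (grad Φ x) / g x)
    (hα : ∀ x, α x = fderiv ℝ G (f x, Φ x) (1, 0))
    (v : (Fin 3 → ℝ) → (Fin 3 → ℝ))
    (hv : ∀ x, v x = fun k => α x * (grad Φ x k - γ x * grad f x k))
    (t₁ t₂ : ℝ) (x : ℝ → (Fin 3 → ℝ))
    (hx : ∀ t ∈ Ioo t₁ t₂, HasDerivAt x (v (x t)) t) :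
    -- (i) the particle stays on the surface f = c
    (∀ t ∈ Ioo t₁ t₂, ∀ s ∈ Ioo t₁ t₂, f (x t) = f (x s)) ∧
    -- (ii) the reaction force is normal to the surface
    (∀ t ∈ Ioo t₁ t₂, ∃ μ : ℝ,
      HasDerivAt (fun s => v (x s))
        (fun k => grad (fun y => (1 / 2) * nsq (v y)) (x t) k + μ * grad f (x t) k) t) := by
  have hfd : Differentiable ℝ f := hf.differentiable two_ne_zero
  have hΦd : Differentiable ℝ Φ := hΦ.differentiable two_ne_zero
  have hγd : Differentiable ℝ γ := by
    simpa only [← hg, ← hγ] using differentiable_dot_grad_div_nsq_grad hf hΦ hf0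
  set h : ℝ × ℝ → ℝ := fun q => fderiv ℝ G q (1, 0)
  have hh : Differentiable ℝ h :=
    ((hG.fderiv_right (m := 1) le_rfl).clm_apply contDiff_const).differentiable one_ne_zero
  have hαeq : α = fun y => h (f y, Φ y) := funext hα
  have hαd : Differentiable ℝ α := hαeq ▸ hh.comp (hfd.prodMk hΦd)
  have hveq : v = fun y => α y • (grad Φ y - γ y • grad f y) := funext hv
  have hvd : ∀ y k, DifferentiableAt ℝ (fun z => v z k) y := fun y k => by
    rw [hveq]
    exact (hαd y).mul (differentiableAt_grad_sub_smul_grad_apply hf hΦ (hγd y) k)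
  have horth : ∀ y, dot (v y) (grad f y) = 0 := fun y => by
    simpa only [hveq, hγ, hg] using dot_smul_sub_proj_eq_zero (hf0 y) (α y) (grad Φ y)
  refine ⟨fun t ht s hs => apply_eq_of_dot_grad_eq_zero hfd horth hx ht hs, fun t ht => ?_⟩
  obtain ⟨p, hp⟩ : ∃ p, rot v (x t) = cross (grad f (x t)) p := ⟨_, by
    rw [hveq]
    exact rot_smul_grad_sub_smul_grad hf hΦ (hγd _) (hαd _)
      (hαeq ▸ grad_comp_prodMk (hh _) (hfd _) (hΦd _))⟩
  refine ⟨-dot p (v (x t)), ?_⟩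
  have hacc := hasDerivAt_comp_integralCurve (hvd (x t)) (hx t ht)
  rwa [convective_eq_grad_half_nsq_add_cross_rot (hvd (x t)), hp,
    cross_cross_eq_neg_smul_of_dot_eq_zero (horth _)] at hacc
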